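/- Conditions Y₁ and Y₂ hold simultaneously if and only if all of the following hold: |a| = |b|; |β_R| = |β_L| = 1/√2; and for every j ∈ {2, 0, -2}: |α_{2 j}| = |α_{(-2) j}|, |α_{2 j}| ≠ |α_{0 j}|, and the product α_{2 j}·α_{(-2) j}·conj(α_{0 j})² is a strictly negative real number (equivalently, arg α_{2 j} + arg α_{(-2) j} − 2·arg α_{0 j} is an odd multiple of π). -/

import Mathlib

/-! The columns `η_R`, `η_L` of a unitary `2 × 2` matrix are orthonormal, so
`diag(p, q) η_R ∈ ℂ η_L` forces `p|a|² + q|c|² = 0`, and likewise `p|b|² + q|d|² = 0`. Adding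
the two gives `q = -p`, and then `|a| = |c| = |b|`; conversely these make `diag(p, -p)` exchange
the two lines. So `Y₁ ∧ Y₂` says `B_j = -A_j ≠ 0` and `B'_j = -A'_j ≠ 0` for every `j`.

The second is `β_R conj(β_L) (α_{0j} conj(α_{-2,j}) + α_{2j} conj(α_{0j})) = 0`, and for nonzero
`u, v` we have `u + v = 0` iff `|u| = |v|` and `conj(u) v < 0`: this is the modulus and phase
condition on column `j`. Given `|α_{2j}| = |α_{-2,j}|`, the equation `B_j = -A_j` reads
`(|α_{2j}|² + |α_{0j}|²)(|β_R|² - |β_L|²) = 0`, and `A_j ≠ 0` then means `|α_{2j}| ≠ |α_{0j}|`. -/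

open ComplexConjugate ComplexOrder Matrix

theorem diagonal_mulVec_fin_two_eq_smul_iff {R : Type*} [Semiring R] (p q u v w x l : R) :
    diagonal ![p, q] *ᵥ ![u, v] = l • ![w, x] ↔ p * u = l * w ∧ q * v = l * x := by
  rw [funext_iff, Fin.forall_fin_two]
  simp [mulVec_diagonal]

section UnitaryFinTwo

variable {𝕜 : Type*} [RCLike 𝕜] {a b c d : 𝕜}

theorem unitary_fin_two_relations (hU : !![a, b; c, d] ∈ unitaryGroup (Fin 2) 𝕜) :
    ((‖a‖ : 𝕜) ^ 2 + (‖c‖ : 𝕜) ^ 2 = 1 ∧ (‖a‖ : 𝕜) ^ 2 + (‖b‖ : 𝕜) ^ 2 = 1 ∧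
      (‖c‖ : 𝕜) ^ 2 + (‖d‖ : 𝕜) ^ 2 = 1) ∧ conj a * b + conj c * d = 0 := by
  have hcols := congrFun₂ (mem_unitaryGroup_iff'.mp hU)
  have hrows := congrFun₂ (mem_unitaryGroup_iff.mp hU)
  simp only [Fin.forall_fin_two] at hcols hrows
  simp [mul_apply, Fin.sum_univ_two, one_apply, RCLike.conj_mul, RCLike.mul_conj] at hcols hrows
  exact ⟨⟨hcols.1.1, hrows.1.1, hrows.2.2⟩, hcols.1.2⟩

theorem norm_eq_of_mem_unitaryGroup_fin_two (hU : !![a, b; c, d] ∈ unitaryGroup (Fin 2) 𝕜) :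
    ‖b‖ = ‖c‖ := by
  obtain ⟨⟨hac, hab, -⟩, -⟩ := unitary_fin_two_relations hU
  have h : (‖b‖ : 𝕜) ^ 2 = (‖c‖ : 𝕜) ^ 2 := by linear_combination hab - hac
  exact (sq_eq_sq₀ (norm_nonneg _) (norm_nonneg _)).mp (mod_cast h)

theorem eq_neg_and_norm_eq_of_diagonal_swaps_columns
    (hU : !![a, b; c, d] ∈ unitaryGroup (Fin 2) 𝕜) {p q : 𝕜} (hpq : (p, q) ≠ (0, 0))
    (h : ∃ l l' : 𝕜, diagonal ![p, q] *ᵥ ![a, c] = l • ![b, d] ∧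
      diagonal ![p, q] *ᵥ ![b, d] = l' • ![a, c]) :
    p ≠ 0 ∧ q = -p ∧ ‖a‖ = ‖c‖ := by
  obtain ⟨⟨hac, hab, hcd⟩, horth⟩ := unitary_fin_two_relations hU
  have horth' : conj b * a + conj d * c = 0 := by simpa [mul_comm] using congrArg conj horth
  obtain ⟨l, l', h₁, h₂⟩ := h
  rw [diagonal_mulVec_fin_two_eq_smul_iff] at h₁ h₂
  have hR : p * (‖a‖ : 𝕜) ^ 2 + q * (‖c‖ : 𝕜) ^ 2 = 0 := by
    rw [← RCLike.conj_mul, ← RCLike.conj_mul]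
    linear_combination conj a * h₁.1 + conj c * h₁.2 + l * horth
  have hL : p * (‖b‖ : 𝕜) ^ 2 + q * (‖d‖ : 𝕜) ^ 2 = 0 := by
    rw [← RCLike.conj_mul, ← RCLike.conj_mul]
    linear_combination conj b * h₂.1 + conj d * h₂.2 + l' * horth'
  have hqp : q = -p := by linear_combination hR + hL - p * hab - q * hcd
  have hp : p ≠ 0 := by
    rintro rfl
    exact hpq (by simp [hqp])
  have hsq : (‖a‖ : 𝕜) ^ 2 = (‖c‖ : 𝕜) ^ 2 :=
    mul_left_cancel₀ hp (by linear_combination hR - (‖c‖ : 𝕜) ^ 2 * hqp)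
  exact ⟨hp, hqp, (sq_eq_sq₀ (norm_nonneg _) (norm_nonneg _)).mp (mod_cast hsq)⟩

theorem diagonal_swaps_columns_of_norm_eq (hU : !![a, b; c, d] ∈ unitaryGroup (Fin 2) 𝕜)
    (hac : ‖a‖ = ‖c‖) (p : 𝕜) :
    ∃ l l' : 𝕜, diagonal ![p, -p] *ᵥ ![a, c] = l • ![b, d] ∧
      diagonal ![p, -p] *ᵥ ![b, d] = l' • ![a, c] := by
  obtain ⟨⟨hcol, -, -⟩, horth⟩ := unitary_fin_two_relations hU
  have ha : a ≠ 0 := by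
    rintro rfl
    rw [norm_zero, eq_comm, norm_eq_zero] at hac
    simp [hac] at hcol
  have hb : b ≠ 0 := by
    rw [← norm_ne_zero_iff, norm_eq_of_mem_unitaryGroup_fin_two hU, ← hac]
    exact norm_ne_zero_iff.mpr ha
  have hsq : (‖a‖ : 𝕜) ^ 2 = (‖c‖ : 𝕜) ^ 2 := by rw [hac]
  have hdet : a * d + c * b = 0 := by
    refine (mul_eq_zero.mp ?_).resolve_left ((map_ne_zero conj).mpr ha)
    linear_combination d * RCLike.conj_mul a + c * horth - d * RCLike.conj_mul c + d * hsq
  refine ⟨p * a / b, p * b / a, ?_, ?_⟩ <;> rw [diagonal_mulVec_fin_two_eq_smul_iff] <;>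
    constructor <;> field_simp <;> linear_combination -p * hdet

theorem diagonal_swaps_columns_iff (hU : !![a, b; c, d] ∈ unitaryGroup (Fin 2) 𝕜) (p q : 𝕜) :
    ((p, q) ≠ (0, 0) ∧ ∃ l l' : 𝕜, diagonal ![p, q] *ᵥ ![a, c] = l • ![b, d] ∧
      diagonal ![p, q] *ᵥ ![b, d] = l' • ![a, c]) ↔ p ≠ 0 ∧ q = -p ∧ ‖a‖ = ‖b‖ := by
  rw [norm_eq_of_mem_unitaryGroup_fin_two hU]
  constructor
  · exact fun ⟨hpq, h⟩ => eq_neg_and_norm_eq_of_diagonal_swaps_columns hU hpq h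
  · rintro ⟨hp, rfl, hac⟩
    exact ⟨by simp [hp], diagonal_swaps_columns_of_norm_eq hU hac p⟩

end UnitaryFinTwo

namespace Complex

theorem add_eq_zero_iff_norm_eq_and_conj_mul_neg {u v : ℂ} (hv : v ≠ 0) :
    u + v = 0 ↔ ‖u‖ = ‖v‖ ∧ conj u * v < 0 := by
  constructor
  · intro h
    obtain rfl : v = -u := by linear_combination h
    have hu : 0 < ‖u‖ := norm_pos_iff.mpr (neg_ne_zero.mp hv)
    refine ⟨(norm_neg u).symm, ?_⟩
    rw [mul_neg, conj_mul', neg_neg_iff_pos, ← ofReal_pow, zero_lt_real]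
    positivity
  · rintro ⟨huv, hneg⟩
    have hu : u ≠ 0 := norm_ne_zero_iff.mp (huv ▸ norm_ne_zero_iff.mpr hv)
    have hw : conj u * v = -(‖u‖ : ℂ) ^ 2 := by
      have := eq_coe_norm_of_nonneg (neg_nonneg.mpr hneg.le)
      rw [norm_neg, norm_mul, norm_conj, ← huv] at this
      push_cast at this ⊢
      linear_combination -this
    refine (mul_eq_zero.mp ?_).resolve_left ((map_ne_zero conj).mpr hu)
    linear_combination conj_mul' u + hw

theorem mul_conj_add_mul_conj_eq_zero_iff {x y z : ℂ} (hx : x ≠ 0) (hy : y ≠ 0) :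
    y * conj z + x * conj y = 0 ↔ ‖x‖ = ‖z‖ ∧ x * z * conj y ^ 2 < 0 := by
  rw [add_eq_zero_iff_norm_eq_and_conj_mul_neg (mul_ne_zero hx ((map_ne_zero conj).mpr hy))]
  have hconj : conj (y * conj z) * (x * conj y) = x * z * conj y ^ 2 := by
    simp only [map_mul, conj_conj]
    ring
  simp only [hconj, norm_mul, norm_conj, mul_comm ‖y‖, eq_comm (a := ‖z‖ * ‖y‖)]
  rw [mul_left_inj' (norm_ne_zero_iff.mpr hy)]

end Complex

section Column

variable {x y z βR βL : ℂ} {A B : ℝ} {A' B' : ℂ}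

theorem column_conditions_iff (hβ : ‖βR‖ ^ 2 + ‖βL‖ ^ 2 = 1)
    (hA : A = ‖x‖ ^ 2 * ‖βR‖ ^ 2 - ‖y‖ ^ 2 * ‖βL‖ ^ 2)
    (hB : B = ‖y‖ ^ 2 * ‖βR‖ ^ 2 - ‖z‖ ^ 2 * ‖βL‖ ^ 2)
    (hA' : A' = βR * x * conj (y * βL)) (hB' : B' = βR * y * conj (z * βL)) :
    ((A ≠ 0 ∧ B = -A) ∧ A' ≠ 0 ∧ B' = -A') ↔
      (‖βR‖ ^ 2 = 1 / 2 ∧ ‖βL‖ ^ 2 = 1 / 2) ∧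
        ‖x‖ = ‖z‖ ∧ ‖x‖ ≠ ‖y‖ ∧ x * z * conj y ^ 2 < 0 := by
  have hB'A' : B' + A' = βR * conj βL * (y * conj z + x * conj y) := by
    rw [hA', hB', map_mul, map_mul]
    ring
  constructor
  · rintro ⟨⟨hA0, hBA⟩, hA'0, hBA'⟩
    obtain ⟨⟨hβR, hx⟩, hy, hβL⟩ : (βR ≠ 0 ∧ x ≠ 0) ∧ y ≠ 0 ∧ βL ≠ 0 := by
      simpa [hA'] using hA'0
    have hE : y * conj z + x * conj y = 0 := by
      refine (mul_eq_zero.mp ?_).resolve_left (mul_ne_zero hβR ((map_ne_zero conj).mpr hβL))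
      rw [← hB'A', hBA', neg_add_cancel]
    obtain ⟨hxz, hneg⟩ := (Complex.mul_conj_add_mul_conj_eq_zero_iff hx hy).mp hE
    have hββ : ‖βR‖ ^ 2 = ‖βL‖ ^ 2 := by
      have hpos : 0 < ‖x‖ ^ 2 + ‖y‖ ^ 2 := by
        have := norm_pos_iff.mpr hx
        positivity
      have h : (‖x‖ ^ 2 + ‖y‖ ^ 2) * (‖βR‖ ^ 2 - ‖βL‖ ^ 2) = 0 := by
        rw [hA, hB, ← hxz] at hBA
        linear_combination hBA
      linarith [(mul_eq_zero.mp h).resolve_left hpos.ne']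
    refine ⟨⟨by linarith, by linarith⟩, hxz, fun hxy => hA0 ?_, hneg⟩
    rw [hA, hxy, hββ, sub_self]
  · rintro ⟨⟨hβR, hβL⟩, hxz, hxy, hneg⟩
    obtain ⟨⟨hx, hz⟩, hy⟩ : (x ≠ 0 ∧ z ≠ 0) ∧ y ≠ 0 := by simpa using hneg.ne
    have hE := (Complex.mul_conj_add_mul_conj_eq_zero_iff hx hy).mpr ⟨hxz, hneg⟩
    refine ⟨⟨?_, ?_⟩, ?_, ?_⟩
    · rw [hA, hβR, hβL, ← sub_mul, mul_ne_zero_iff, sub_ne_zero]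
      exact ⟨fun h => hxy ((sq_eq_sq₀ (norm_nonneg _) (norm_nonneg _)).mp h), by norm_num⟩
    · rw [hA, hB, hβR, hβL, hxz]
      ring
    · have hβR0 : βR ≠ 0 := by rintro rfl; norm_num at hβR
      have hβL0 : βL ≠ 0 := by rintro rfl; norm_num at hβL
      simp [hA', hβR0, hx, hy, hβL0]
    · rw [← add_eq_zero_iff_eq_neg, hB'A', hE, mul_zero]

end Column

theorem eq_one_div_sqrt_two_iff_sq {t : ℝ} (ht : 0 ≤ t) : t = 1 / √2 ↔ t ^ 2 = 1 / 2 := by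
  rw [one_div, ← Real.sqrt_inv, eq_comm, Real.sqrt_eq_iff_eq_sq (by norm_num) ht, one_div, eq_comm]

theorem conditionY1_and_Y2_iff_general (a b c d : ℂ)
    (hH1 : !![a, b; c, d] ∈ Matrix.unitaryGroup (Fin 2) ℂ)
    (α : Matrix (Fin 3) (Fin 3) ℂ)
    (βR βL : ℂ) (hβ : ‖βR‖ ^ 2 + ‖βL‖ ^ 2 = 1)
    (A B : Fin 3 → ℝ) (A' B' : Fin 3 → ℂ)
    (hA : ∀ j, A j = ‖α 0 j‖ ^ 2 * ‖βR‖ ^ 2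
        - ‖α 1 j‖ ^ 2 * ‖βL‖ ^ 2)
    (hB : ∀ j, B j = ‖α 1 j‖ ^ 2 * ‖βR‖ ^ 2
        - ‖α 2 j‖ ^ 2 * ‖βL‖ ^ 2)
    (hA' : ∀ j, A' j = βR * α 0 j * starRingEnd ℂ (α 1 j * βL))
    (hB' : ∀ j, B' j = βR * α 1 j * starRingEnd ℂ (α 2 j * βL)) :
    ((∀ j : Fin 3, (A j, B j) ≠ (0, 0) ∧
        ∃ l l' : ℂ,
          (Matrix.diagonal ![(A j : ℂ), (B j : ℂ)]).mulVec ![a, c] = l • ![b, d] ∧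
          (Matrix.diagonal ![(A j : ℂ), (B j : ℂ)]).mulVec ![b, d] = l' • ![a, c]) ∧
      (∀ j : Fin 3, (A' j, B' j) ≠ (0, 0) ∧
        ∃ μ μ' : ℂ,
          (Matrix.diagonal ![A' j, B' j]).mulVec ![a, c] = μ • ![b, d] ∧
          (Matrix.diagonal ![A' j, B' j]).mulVec ![b, d] = μ' • ![a, c])) ↔
    (‖a‖ = ‖b‖ ∧
      (‖βR‖ = 1 / Real.sqrt 2 ∧ ‖βL‖ = 1 / Real.sqrt 2) ∧
      (∀ j : Fin 3, ‖α 0 j‖ = ‖α 2 j‖ ∧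
        ‖α 0 j‖ ≠ ‖α 1 j‖ ∧
        (α 0 j * α 2 j * (starRingEnd ℂ (α 1 j)) ^ 2).im = 0 ∧
        (α 0 j * α 2 j * (starRingEnd ℂ (α 1 j)) ^ 2).re < 0)) := by
  have hcast (j : Fin 3) : (A j, B j) ≠ (0, 0) ↔ ((A j : ℂ), (B j : ℂ)) ≠ (0, 0) := by
    simp [Prod.ext_iff]
  have hneg (w : ℂ) : w.im = 0 ∧ w.re < 0 ↔ w < 0 := by rw [Complex.neg_iff, and_comm]
  simp only [hcast, diagonal_swaps_columns_iff hH1, Complex.ofReal_ne_zero, ← Complex.ofReal_neg,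
    Complex.ofReal_inj, eq_one_div_sqrt_two_iff_sq (norm_nonneg _), hneg]
  have hcol (j : Fin 3) :=
    column_conditions_iff hβ (hA j) (hB j) (hA' j) (hB' j)
  constructor
  · rintro ⟨h₁, h₂⟩
    have h j := (hcol j).mp ⟨⟨(h₁ j).1, (h₁ j).2.1⟩, (h₂ j).1, (h₂ j).2.1⟩
    exact ⟨(h₁ 0).2.2, (h 0).1, fun j => (h j).2⟩
  · rintro ⟨hab, hββ, hcols⟩
    have h j := (hcol j).mpr ⟨hββ, hcols j⟩
    exact ⟨fun j => ⟨(h j).1.1, (h j).1.2, hab⟩, fun j => ⟨(h j).2.1, (h j).2.2, hab⟩⟩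

/-- Conditions `Y₁` and `Y₂` hold simultaneously iff `|a| = |b|`,
`|β_R| = |β_L| = 1/√2`, and for every column `j`: `|α_{2j}| = |α_{(-2)j}|`,
`|α_{2j}| ≠ |α_{0j}|`, and the product `α_{2j}·α_{(-2)j}·conj(α_{0j})²` is a strictly
negative real number.  Rows/columns of `α = H̃₂` are indexed by `{2, 0, -2}` in this
order (index `0 ↦ 2`, `1 ↦ 0`, `2 ↦ -2`); `η_R = (a, c)ᵀ` and `η_L = (b, d)ᵀ` are the
columns of the unitary matrix `H₁ = !![a, b; c, d]`. -/
theorem conditionY1_and_Y2_iff (a b c d : ℂ)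
    (hH1 : !![a, b; c, d] ∈ Matrix.unitaryGroup (Fin 2) ℂ)
    (α : Matrix (Fin 3) (Fin 3) ℂ) (hα : α ∈ Matrix.unitaryGroup (Fin 3) ℂ)
    (βR βL : ℂ) (hβ : ‖βR‖ ^ 2 + ‖βL‖ ^ 2 = 1)
    (A B : Fin 3 → ℝ) (A' B' : Fin 3 → ℂ)
    (hA : ∀ j, A j = ‖α 0 j‖ ^ 2 * ‖βR‖ ^ 2
        - ‖α 1 j‖ ^ 2 * ‖βL‖ ^ 2)
    (hB : ∀ j, B j = ‖α 1 j‖ ^ 2 * ‖βR‖ ^ 2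
        - ‖α 2 j‖ ^ 2 * ‖βL‖ ^ 2)
    (hA' : ∀ j, A' j = βR * α 0 j * starRingEnd ℂ (α 1 j * βL))
    (hB' : ∀ j, B' j = βR * α 1 j * starRingEnd ℂ (α 2 j * βL)) :
    ((∀ j : Fin 3, (A j, B j) ≠ (0, 0) ∧
        ∃ l l' : ℂ,
          (Matrix.diagonal ![(A j : ℂ), (B j : ℂ)]).mulVec ![a, c] = l • ![b, d] ∧
          (Matrix.diagonal ![(A j : ℂ), (B j : ℂ)]).mulVec ![b, d] = l' • ![a, c]) ∧
      (∀ j : Fin 3, (A' j, B' j) ≠ (0, 0) ∧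
        ∃ μ μ' : ℂ,
          (Matrix.diagonal ![A' j, B' j]).mulVec ![a, c] = μ • ![b, d] ∧
          (Matrix.diagonal ![A' j, B' j]).mulVec ![b, d] = μ' • ![a, c])) ↔
    (‖a‖ = ‖b‖ ∧
      (‖βR‖ = 1 / Real.sqrt 2 ∧ ‖βL‖ = 1 / Real.sqrt 2) ∧
      (∀ j : Fin 3, ‖α 0 j‖ = ‖α 2 j‖ ∧
        ‖α 0 j‖ ≠ ‖α 1 j‖ ∧
        (α 0 j * α 2 j * (starRingEnd ℂ (α 1 j)) ^ 2).im = 0 ∧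
        (α 0 j * α 2 j * (starRingEnd ℂ (α 1 j)) ^ 2).re < 0)) :=
  conditionY1_and_Y2_iff_general a b c d hH1 α βR βL hβ A B A' B' hA hB hA' hB'
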